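/- arXiv:2209.01625 — 2 statements merged into one kernel-verified Lean document; each statement's English description precedes it below -/
import Mathlib

section
/- Let V be the convolution operator on l²(ℤ) associated to a symmetric finitely supported a : ℤ → ℝ with a(k) = 0 for |k| > K (K ≥ 1). Set v = ‖V‖ and for integers k, n set ρ = ⌈|k-n|/K⌉. Then for all t ≥ 0 the matrix entries of C(t) = cos(√V t) satisfy |C_{k,n}(t)| ≤ v^ρ t^{2ρ} e^{√v t} / (2ρ)!. -/
set_option synthInstance.maxHeartbeats 400000
set_option maxHeartbeats 1000000

open scoped BigOperators

/-- Evaluation at coordinate `k` as a continuous linear map on `l²(ℤ)`. -/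
private noncomputable def evalCLM (k : ℤ) : lp (fun _ : ℤ => ℝ) 2 →L[ℝ] ℝ :=
  LinearMap.mkContinuous
    { toFun := fun q => q k
      map_add' := fun q r => by
        simp [lp.coeFn_add]
      map_smul' := fun c q => by
        simp [lp.coeFn_smul] }
    1 (fun q => by
      have h := lp.norm_apply_le_norm (E := fun _ : ℤ => ℝ) (p := 2) (by norm_num) q k
      have h' : |(q : ℤ → ℝ) k| ≤ ‖q‖ := by simpa using h
      simp only [one_mul, Real.norm_eq_abs, LinearMap.coe_mk, AddHom.coe_mk]
      exact h')

private lemma evalCLM_apply (k : ℤ) (q : lp (fun _ : ℤ => ℝ) 2) :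
    evalCLM k q = q k := rfl

/-- Finite propagation: entries of `V^m` vanish outside the band of width `m*K`. -/
private lemma pow_entry_zero
    (K : ℕ) (a : ℤ → ℝ)
    (V : lp (fun _ : ℤ => ℝ) 2 →L[ℝ] lp (fun _ : ℤ => ℝ) 2)
    (hV : ∀ (q : lp (fun _ : ℤ => ℝ) 2) (j : ℤ),
      (V q) j = ∑ k ∈ Finset.Icc (j - (K : ℤ)) (j + (K : ℤ)), a (k - j) * q k)
    (n : ℤ) :
    ∀ m : ℕ, ∀ j : ℤ, (m : ℤ) * K < |j - n| →
      ((V ^ m) (lp.single 2 n (1 : ℝ))) j = 0 := by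
  have step : ∀ (q : lp (fun _ : ℤ => ℝ) 2) (m : ℕ),
      (∀ j : ℤ, (m : ℤ) * K < |j - n| → q j = 0) →
      ∀ j : ℤ, ((m : ℤ) + 1) * K < |j - n| → (V q) j = 0 := by
    intro q m hq j hj
    rw [hV]
    apply Finset.sum_eq_zero
    intro i hi
    rw [Finset.mem_Icc] at hi
    have hji : |j - i| ≤ (K : ℤ) := abs_le.mpr ⟨by omega, by omega⟩
    have habs : |j - n| - |j - i| ≤ |i - n| := by
      have h := abs_sub_abs_le_abs_sub (j - n) (j - i)
      have h0 : (j - n) - (j - i) = i - n := by ring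
      rwa [h0] at h
    have : q i = 0 := hq i (by linarith)
    rw [this, mul_zero]
  intro m
  induction m with
  | zero =>
    intro j hj
    simp only [Nat.cast_zero, zero_mul] at hj
    have hjn : j ≠ n := by
      intro h; rw [h] at hj; simp at hj
    simp [pow_zero, ContinuousLinearMap.one_apply, lp.single_apply_ne 2 n _ hjn, Pi.single_apply, hjn]
  | succ m ih =>
    intro j hj
    have hj' : ((m : ℤ) + 1) * K < |j - n| := by push_cast at hj ⊢; linarith
    rw [pow_succ']
    rw [ContinuousLinearMap.mul_apply]
    exact step _ m ih j hj'

private lemma pow_apply_norm_le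
    (V : lp (fun _ : ℤ => ℝ) 2 →L[ℝ] lp (fun _ : ℤ => ℝ) 2) :
    ∀ (m : ℕ) (q : lp (fun _ : ℤ => ℝ) 2), ‖(V ^ m) q‖ ≤ ‖V‖ ^ m * ‖q‖ := by
  intro m
  induction m with
  | zero => intro q; simp
  | succ m ih =>
    intro q
    rw [pow_succ', ContinuousLinearMap.mul_apply]
    calc ‖V ((V ^ m) q)‖ ≤ ‖V‖ * ‖(V ^ m) q‖ := V.le_opNorm _
      _ ≤ ‖V‖ * (‖V‖ ^ m * ‖q‖) := by
          have := ih q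
          have h0 : (0:ℝ) ≤ ‖V‖ := norm_nonneg _
          nlinarith [norm_nonneg ((V ^ m) q)]
      _ = ‖V‖ ^ (m + 1) * ‖q‖ := by ring

private lemma abs_apply_le_norm (q : lp (fun _ : ℤ => ℝ) 2) (k : ℤ) : |q k| ≤ ‖q‖ := by
  have h := lp.norm_apply_le_norm (E := fun _ : ℤ => ℝ) (p := 2) (by norm_num) q k
  simpa using h

private lemma norm_single_one (n : ℤ) : ‖lp.single (E := fun _ : ℤ => ℝ) 2 n (1:ℝ)‖ = 1 := by
  have := lp.norm_single (p := 2) (E := fun _ : ℤ => ℝ) (by norm_num) n (1 : ℝ)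
  simpa using this

private lemma entry_abs_le
    (V : lp (fun _ : ℤ => ℝ) 2 →L[ℝ] lp (fun _ : ℤ => ℝ) 2) (m : ℕ) (n k : ℤ) :
    |((V ^ m) (lp.single 2 n (1 : ℝ))) k| ≤ ‖V‖ ^ m := by
  have h1 := abs_apply_le_norm ((V ^ m) (lp.single 2 n (1 : ℝ))) k
  have h2 := pow_apply_norm_le V m (lp.single 2 n (1 : ℝ))
  have h3 : ‖lp.single (E := fun _ : ℤ => ℝ) 2 n (1:ℝ)‖ = 1 := norm_single_one n
  rw [h3, mul_one] at h2
  exact h1.trans h2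

/-- matrix-entry bound for `C(t) = cos(√V t) = ∑ (-1)^m (t² V)^m/(2m)!`:
`|C_{k,n}(t)| ≤ v^ρ t^{2ρ} e^{√v t}/(2ρ)!` with `v = ‖V‖`, `ρ = ⌈|k-n|/K⌉`. -/
theorem cos_sqrt_entry_bound
    (K : ℕ) (hK : 1 ≤ K) (a : ℤ → ℝ)
    (hsym : ∀ k : ℤ, a (-k) = a k)
    (hsupp : ∀ k : ℤ, (K : ℤ) < |k| → a k = 0)
    (hpos : ∀ lam : ℝ,
      0 < ∑ k ∈ Finset.Icc (-(K : ℤ)) (K : ℤ), a k * Real.cos ((k : ℝ) * lam))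
    (V : lp (fun _ : ℤ => ℝ) 2 →L[ℝ] lp (fun _ : ℤ => ℝ) 2)
    (hV : ∀ (q : lp (fun _ : ℤ => ℝ) 2) (j : ℤ),
      (V q) j = ∑ k ∈ Finset.Icc (j - (K : ℤ)) (j + (K : ℤ)), a (k - j) * q k) :
    ∀ t : ℝ, 0 ≤ t → ∀ k n : ℤ,
      |((∑' m : ℕ, ((-1 : ℝ) ^ m * t ^ (2 * m) / (Nat.factorial (2 * m)) : ℝ) • (V ^ m))
          (lp.single 2 n (1 : ℝ))) k|
        ≤ ‖V‖ ^ (⌈(|k - n| : ℝ) / (K : ℝ)⌉₊) * t ^ (2 * ⌈(|k - n| : ℝ) / (K : ℝ)⌉₊)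
            / (Nat.factorial (2 * ⌈(|k - n| : ℝ) / (K : ℝ)⌉₊))
            * Real.exp (Real.sqrt ‖V‖ * t) := by
  intro t ht k n
  set ρ : ℕ := ⌈(|k - n| : ℝ) / (K : ℝ)⌉₊ with hρdef
  have hv0 : (0:ℝ) ≤ ‖V‖ := norm_nonneg V
  set x : ℝ := Real.sqrt ‖V‖ * t with hxdef
  have hx0 : 0 ≤ x := mul_nonneg (Real.sqrt_nonneg _) ht
  have hxpow : ∀ m : ℕ, x ^ (2 * m) = ‖V‖ ^ m * t ^ (2 * m) := by
    intro m
    calc x ^ (2 * m) = ((Real.sqrt ‖V‖) ^ 2) ^ m * t ^ (2 * m) := by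
          rw [hxdef, mul_pow, ← pow_mul]
      _ = ‖V‖ ^ m * t ^ (2 * m) := by rw [Real.sq_sqrt hv0]
  -- summability facts
  have sfull : Summable (fun j : ℕ => x ^ j / (j.factorial : ℝ)) :=
    Real.summable_pow_div_factorial x
  have seven : Summable (fun m : ℕ => x ^ (2 * m) / ((2 * m).factorial : ℝ)) :=
    sfull.comp_injective (mul_right_injective₀ two_ne_zero)
  -- the scalar coefficients
  set c : ℕ → ℝ := fun m => (-1 : ℝ) ^ m * t ^ (2 * m) / ((2 * m).factorial : ℝ) with hcdef
  have hcabs : ∀ m : ℕ, |c m| = t ^ (2 * m) / ((2 * m).factorial : ℝ) := by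
    intro m
    rw [hcdef]
    rw [abs_div, abs_mul, abs_pow, abs_pow, abs_neg, abs_one, one_pow, one_mul,
      abs_of_nonneg ht, Nat.abs_cast]
  have hVpow : ∀ m : ℕ, ‖V ^ m‖ ≤ ‖V‖ ^ m := by
    intro m
    exact ContinuousLinearMap.opNorm_le_bound _ (pow_nonneg hv0 m)
      (fun q => pow_apply_norm_le V m q)
  have hAn : ∀ m : ℕ, ‖c m • (V ^ m)‖ ≤ x ^ (2 * m) / ((2 * m).factorial : ℝ) := by
    intro m
    have h0 : ‖c m • (V ^ m)‖ ≤ |c m| * ‖V ^ m‖ := by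
      simpa [Real.norm_eq_abs] using norm_smul_le (c m) (V ^ m)
    rw [hxpow m]
    have h1 : (0:ℝ) ≤ t ^ (2 * m) / ((2 * m).factorial : ℝ) := by positivity
    calc ‖c m • (V ^ m)‖ ≤ |c m| * ‖V ^ m‖ := h0
      _ = t ^ (2 * m) / ((2 * m).factorial : ℝ) * ‖V ^ m‖ := by rw [hcabs m]
      _ ≤ t ^ (2 * m) / ((2 * m).factorial : ℝ) * ‖V‖ ^ m :=
          mul_le_mul_of_nonneg_left (hVpow m) h1
      _ = ‖V‖ ^ m * t ^ (2 * m) / ((2 * m).factorial : ℝ) := by ring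
  have hA : Summable (fun m : ℕ => c m • (V ^ m)) :=
    Summable.of_norm_bounded seven hAn
  -- interchange tsum with evaluation
  have key : ((∑' m : ℕ, c m • (V ^ m)) (lp.single 2 n (1 : ℝ))) k
      = ∑' m : ℕ, c m * (((V ^ m) (lp.single 2 n (1 : ℝ))) k) := by
    have h := ContinuousLinearMap.map_tsum
      ((evalCLM k).comp (ContinuousLinearMap.apply ℝ (lp (fun _ : ℤ => ℝ) 2)
        (lp.single 2 n (1 : ℝ)))) hA
    simp only [ContinuousLinearMap.coe_comp', Function.comp_apply,
      ContinuousLinearMap.apply_apply, evalCLM_apply,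
      ContinuousLinearMap.smul_apply, lp.coeFn_smul, Pi.smul_apply,
      smul_eq_mul] at h
    exact h
  -- the dominating sequence
  set b : ℕ → ℝ := fun m => if m < ρ then 0 else x ^ (2 * m) / ((2 * m).factorial : ℝ)
    with hbdef
  have hb_le : ∀ m : ℕ, b m ≤ x ^ (2 * m) / ((2 * m).factorial : ℝ) := by
    intro m
    simp only [hbdef]
    by_cases h : m < ρ
    · rw [if_pos h]; positivity
    · rw [if_neg h]
  have hb_nonneg : ∀ m : ℕ, 0 ≤ b m := by
    intro m
    simp only [hbdef]
    by_cases h : m < ρ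
    · rw [if_pos h]
    · rw [if_neg h]; positivity
  have hbsum : Summable b := Summable.of_nonneg_of_le hb_nonneg hb_le seven
  -- termwise bound
  have hbe : ∀ m : ℕ, |c m * (((V ^ m) (lp.single 2 n (1 : ℝ))) k)| ≤ b m := by
    intro m
    by_cases h : m < ρ
    · have hlt : (m : ℝ) < |(k : ℝ) - (n : ℝ)| / (K : ℝ) := Nat.lt_ceil.mp h
      have hK0 : (0:ℝ) < (K : ℝ) := by exact_mod_cast hK
      have hltK : (m : ℝ) * (K : ℝ) < |(k : ℝ) - (n : ℝ)| := (lt_div_iff₀ hK0).mp hlt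
      have hint : (m : ℤ) * (K : ℤ) < |k - n| := by
        have : ((m * K : ℤ) : ℝ) < ((|k - n| : ℤ) : ℝ) := by push_cast; exact hltK
        exact_mod_cast this
      rw [pow_entry_zero K a V hV n m k hint, mul_zero, abs_zero]
      simp only [hbdef]
      rw [if_pos h]
    · simp only [hbdef]
      rw [if_neg h, abs_mul, hcabs m, hxpow m]
      have hentry : |((V ^ m) (lp.single 2 n (1 : ℝ))) k| ≤ ‖V‖ ^ m :=
        entry_abs_le V m n k
      have h1 : (0:ℝ) ≤ t ^ (2 * m) / ((2 * m).factorial : ℝ) := by positivity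
      calc t ^ (2 * m) / ((2 * m).factorial : ℝ) * |((V ^ m) (lp.single 2 n (1 : ℝ))) k|
          ≤ t ^ (2 * m) / ((2 * m).factorial : ℝ) * ‖V‖ ^ m :=
            mul_le_mul_of_nonneg_left hentry h1
        _ = ‖V‖ ^ m * t ^ (2 * m) / ((2 * m).factorial : ℝ) := by ring
  have hesum : Summable (fun m : ℕ => |c m * (((V ^ m) (lp.single 2 n (1 : ℝ))) k)|) :=
    Summable.of_nonneg_of_le (fun m => abs_nonneg _) hbe hbsum
  -- |tsum| ≤ tsum of abs ≤ tsum b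
  have habs_le : |∑' m : ℕ, c m * (((V ^ m) (lp.single 2 n (1 : ℝ))) k)|
      ≤ ∑' m : ℕ, b m := by
    calc |∑' m : ℕ, c m * (((V ^ m) (lp.single 2 n (1 : ℝ))) k)|
        ≤ ∑' m : ℕ, |c m * (((V ^ m) (lp.single 2 n (1 : ℝ))) k)| := by
          have := norm_tsum_le_tsum_norm (f := fun m : ℕ =>
            c m * (((V ^ m) (lp.single 2 n (1 : ℝ))) k))
            (by simpa only [Real.norm_eq_abs] using hesum)
          simpa only [Real.norm_eq_abs] using this
      _ ≤ ∑' m : ℕ, b m := Summable.tsum_le_tsum hbe hesum hbsum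
  -- reindex the tail
  have hinj : Function.Injective (fun j : ℕ => ρ + j) := add_right_injective ρ
  have hsupp_b : Function.support b ⊆ Set.range (fun j : ℕ => ρ + j) := by
    intro m hm
    rcases lt_or_ge m ρ with h | h
    · exact absurd (by simp only [hbdef]; exact if_pos h) hm
    · exact ⟨m - ρ, by simp; omega⟩
  have hreindex : (∑' j : ℕ, b (ρ + j)) = ∑' m : ℕ, b m :=
    Function.Injective.tsum_eq hinj hsupp_b
  -- term bound for the tail
  have hterm : ∀ j : ℕ, b (ρ + j)
      ≤ x ^ (2 * ρ) / ((2 * ρ).factorial : ℝ) * (x ^ (2 * j) / ((2 * j).factorial : ℝ)) := by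
    intro j
    have hnlt : ¬ (ρ + j < ρ) := by omega
    simp only [hbdef]
    simp only [if_neg hnlt]
    have hfac : ((2 * ρ).factorial : ℝ) * ((2 * j).factorial : ℝ)
        ≤ ((2 * (ρ + j)).factorial : ℝ) := by
      have hd := Nat.factorial_mul_factorial_dvd_factorial_add (2 * ρ) (2 * j)
      have h2 : 2 * ρ + 2 * j = 2 * (ρ + j) := by ring
      rw [h2] at hd
      exact_mod_cast Nat.le_of_dvd (Nat.factorial_pos _) hd
    have hfac' : ((2 * ρ).factorial : ℝ) * ((2 * j).factorial : ℝ)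
        ≤ ((2 * ρ + 2 * j).factorial : ℝ) := by
      rw [show 2 * ρ + 2 * j = 2 * (ρ + j) by ring]
      exact hfac
    calc x ^ (2 * (ρ + j)) / ((2 * (ρ + j)).factorial : ℝ)
        ≤ (x ^ (2 * ρ) * x ^ (2 * j)) / (((2 * ρ).factorial : ℝ) * ((2 * j).factorial : ℝ)) := by
          rw [show 2 * (ρ + j) = 2 * ρ + 2 * j by ring, pow_add]
          exact div_le_div_of_nonneg_left (by positivity) (by positivity) hfac'
      _ = x ^ (2 * ρ) / ((2 * ρ).factorial : ℝ) * (x ^ (2 * j) / ((2 * j).factorial : ℝ)) :=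
          (div_mul_div_comm _ _ _ _).symm
  have hbsum' : Summable (fun j : ℕ => b (ρ + j)) := hbsum.comp_injective hinj
  have hprod_sum : Summable (fun j : ℕ =>
      x ^ (2 * ρ) / ((2 * ρ).factorial : ℝ) * (x ^ (2 * j) / ((2 * j).factorial : ℝ))) :=
    seven.mul_left _
  have htail : (∑' m : ℕ, b m)
      ≤ x ^ (2 * ρ) / ((2 * ρ).factorial : ℝ) * (∑' j : ℕ, x ^ (2 * j) / ((2 * j).factorial : ℝ)) := by
    rw [← hreindex]
    calc (∑' j : ℕ, b (ρ + j))
        ≤ ∑' j : ℕ, x ^ (2 * ρ) / ((2 * ρ).factorial : ℝ)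
            * (x ^ (2 * j) / ((2 * j).factorial : ℝ)) :=
          Summable.tsum_le_tsum hterm hbsum' hprod_sum
      _ = x ^ (2 * ρ) / ((2 * ρ).factorial : ℝ)
            * (∑' j : ℕ, x ^ (2 * j) / ((2 * j).factorial : ℝ)) := tsum_mul_left
  -- even subseries of exp
  have heven_le : (∑' j : ℕ, x ^ (2 * j) / ((2 * j).factorial : ℝ)) ≤ Real.exp x := by
    have hfull : (∑' j : ℕ, x ^ j / (j.factorial : ℝ)) = Real.exp x := by
      rw [Real.exp_eq_exp_ℝ, NormedSpace.exp_eq_tsum_div]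
    rw [← hfull]
    exact Summable.tsum_le_tsum_of_inj (fun j : ℕ => 2 * j) (mul_right_injective₀ two_ne_zero)
      (fun m _ => by positivity) (fun j => le_rfl) seven sfull
  -- finish
  have hhead : (0:ℝ) ≤ x ^ (2 * ρ) / ((2 * ρ).factorial : ℝ) := by positivity
  have hfinal : (∑' m : ℕ, b m)
      ≤ x ^ (2 * ρ) / ((2 * ρ).factorial : ℝ) * Real.exp x :=
    htail.trans (mul_le_mul_of_nonneg_left heven_le hhead)
  rw [key]
  refine habs_le.trans (hfinal.trans_eq ?_)
  rw [hxpow ρ]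
  try ring
end

section
/- Under the same assumptions, the matrix entries of S(t) = (√V)^{-1} sin(√V t) satisfy |S_{k,n}(t)| ≤ v^ρ t^{2ρ+1} e^{√v t} / (2ρ+1)! for all t ≥ 0, where v = ‖V‖ and ρ = ⌈|k-n|/K⌉. -/
set_option synthInstance.maxHeartbeats 400000
set_option maxHeartbeats 1000000

namespace SinSqrtAux

noncomputable abbrev E2 : Type := lp (fun _ : ℤ => ℝ) 2

noncomputable def evalk (k : ℤ) : E2 →L[ℝ] ℝ :=
  LinearMap.mkContinuous
    { toFun := fun f => f k
      map_add' := fun f g => by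
        simp [lp.coeFn_add]
      map_smul' := fun c f => by
        simp [lp.coeFn_smul] }
    1 (fun f => by
      show ‖f k‖ ≤ 1 * ‖f‖
      simpa using lp.norm_apply_le_norm (by norm_num : (2 : ENNReal) ≠ 0) f k)

@[simp] lemma evalk_apply (k : ℤ) (f : E2) : evalk k f = f k := rfl

lemma pow_apply_norm (V : E2 →L[ℝ] E2) (x : E2) :
    ∀ m : ℕ, ‖(V ^ m) x‖ ≤ ‖V‖ ^ m * ‖x‖ := by
  intro m
  induction m with
  | zero => simp
  | succ m ih =>
      have h1 : (V ^ (m + 1)) x = V ((V ^ m) x) := by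
        rw [pow_succ']; rfl
      rw [h1]
      calc ‖V ((V ^ m) x)‖ ≤ ‖V‖ * ‖(V ^ m) x‖ := V.le_opNorm _
        _ ≤ ‖V‖ * (‖V‖ ^ m * ‖x‖) := by
            exact mul_le_mul_of_nonneg_left ih (norm_nonneg V)
        _ = ‖V‖ ^ (m + 1) * ‖x‖ := by ring

lemma band_zero (K : ℕ) (a : ℤ → ℝ)
    (V : E2 →L[ℝ] E2)
    (hV : ∀ (q : E2) (j : ℤ),
      (V q) j = ∑ k ∈ Finset.Icc (j - (K : ℤ)) (j + (K : ℤ)), a (k - j) * q k)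
    (n : ℤ) :
    ∀ m : ℕ, ∀ k : ℤ, (K : ℤ) * m < |k - n| →
      ((V ^ m) (lp.single 2 n (1 : ℝ))) k = 0 := by
  intro m
  induction m with
  | zero =>
      intro k hk
      have hkn : k ≠ n := by
        intro h; rw [h] at hk; simp at hk
      simp only [pow_zero, ContinuousLinearMap.one_apply]
      exact lp.single_apply_ne 2 n 1 hkn
  | succ m ih =>
      intro k hk
      have h1 : (V ^ (m + 1)) (lp.single 2 n (1 : ℝ))
          = V ((V ^ m) (lp.single 2 n (1 : ℝ))) := by
        rw [pow_succ']; rfl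
      rw [h1, hV]
      apply Finset.sum_eq_zero
      intro j hj
      rw [Finset.mem_Icc] at hj
      have hjk : |k - j| ≤ (K : ℤ) := by
        rw [abs_le]; omega
      have htri : |k - n| ≤ |k - j| + |j - n| := abs_sub_le k j n
      have hcast : ((m + 1 : ℕ) : ℤ) = (m : ℤ) + 1 := by push_cast; ring
      have hjn : (K : ℤ) * m < |j - n| := by
        rw [hcast] at hk; nlinarith
      rw [ih j hjn, mul_zero]

end SinSqrtAux

open SinSqrtAux in
/-- matrix-entry bound for `S(t) = (√V)⁻¹ sin(√V t) = ∑ (-1)^m V^m t^{2m+1}/(2m+1)!`: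
`|S_{k,n}(t)| ≤ v^ρ t^{2ρ+1} e^{√v t}/(2ρ+1)!` with `v = ‖V‖`, `ρ = ⌈|k-n|/K⌉`. -/
theorem sin_sqrt_entry_bound
    (K : ℕ) (hK : 1 ≤ K) (a : ℤ → ℝ)
    (hsym : ∀ k : ℤ, a (-k) = a k)
    (hsupp : ∀ k : ℤ, (K : ℤ) < |k| → a k = 0)
    (hpos : ∀ lam : ℝ,
      0 < ∑ k ∈ Finset.Icc (-(K : ℤ)) (K : ℤ), a k * Real.cos ((k : ℝ) * lam))
    (V : lp (fun _ : ℤ => ℝ) 2 →L[ℝ] lp (fun _ : ℤ => ℝ) 2)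
    (hV : ∀ (q : lp (fun _ : ℤ => ℝ) 2) (j : ℤ),
      (V q) j = ∑ k ∈ Finset.Icc (j - (K : ℤ)) (j + (K : ℤ)), a (k - j) * q k) :
    ∀ t : ℝ, 0 ≤ t → ∀ k n : ℤ,
      |((∑' m : ℕ, ((-1 : ℝ) ^ m * t ^ (2 * m + 1) / (Nat.factorial (2 * m + 1)) : ℝ) • (V ^ m))
          (lp.single 2 n (1 : ℝ))) k|
        ≤ ‖V‖ ^ (⌈(|k - n| : ℝ) / (K : ℝ)⌉₊) * t ^ (2 * ⌈(|k - n| : ℝ) / (K : ℝ)⌉₊ + 1)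
            / (Nat.factorial (2 * ⌈(|k - n| : ℝ) / (K : ℝ)⌉₊ + 1))
            * Real.exp (Real.sqrt ‖V‖ * t) := by
  intro t ht k n
  set ρ : ℕ := ⌈(|k - n| : ℝ) / (K : ℝ)⌉₊ with hρdef
  set v : ℝ := ‖V‖ with hvdef
  set y : ℝ := Real.sqrt v * t with hydef
  have hv : 0 ≤ v := norm_nonneg V
  have hy : 0 ≤ y := mul_nonneg (Real.sqrt_nonneg _) ht
  have hsq : Real.sqrt v ^ 2 = v := Real.sq_sqrt hv
  set c : ℕ → ℝ := fun m =>
    (-1 : ℝ) ^ m * t ^ (2 * m + 1) / (Nat.factorial (2 * m + 1)) with hcdef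
  set en : E2 := lp.single 2 n (1 : ℝ) with hendef
  have hen_norm : ‖en‖ = 1 := by
    have := lp.norm_single (E := fun _ : ℤ => ℝ) (p := 2) (by norm_num) n (1 : ℝ)
    simpa [hendef] using this
  have hcm : ∀ m : ℕ, |c m| = t ^ (2 * m + 1) / (Nat.factorial (2 * m + 1)) := by
    intro m
    rw [hcdef]
    rw [abs_div, abs_mul, abs_pow, abs_neg, abs_one, one_pow, one_mul,
      abs_pow, abs_of_nonneg ht, Nat.abs_cast]
  -- v^j * t^(2j) = y^(2j)
  have hyj : ∀ j : ℕ, v ^ j * t ^ (2 * j) = y ^ (2 * j) := by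
    intro j
    have hy2 : y ^ 2 = v * t ^ 2 := by
      rw [hydef, mul_pow, hsq]
    calc v ^ j * t ^ (2 * j) = (v * t ^ 2) ^ j := by
          rw [mul_pow, ← pow_mul]
      _ = (y ^ 2) ^ j := by rw [hy2]
      _ = y ^ (2 * j) := by rw [← pow_mul]
  -- base summabilities
  have hbase : Summable (fun i : ℕ => y ^ i / (i.factorial : ℝ)) :=
    Real.summable_pow_div_factorial y
  have h2inj : Function.Injective (fun j : ℕ => 2 * j) := by
    intro a b hab; dsimp at hab; omega
  have heven : Summable (fun j : ℕ => y ^ (2 * j) / ((2 * j).factorial : ℝ)) :=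
    hbase.comp_injective h2inj
  -- norm of V^m applied entries
  have hentry : ∀ m : ℕ, |((V ^ m) en) k| ≤ v ^ m := by
    intro m
    have h1 : ‖((V ^ m) en) k‖ ≤ ‖(V ^ m) en‖ :=
      lp.norm_apply_le_norm (by norm_num : (2 : ENNReal) ≠ 0) _ k
    have h2 : ‖(V ^ m) en‖ ≤ ‖V‖ ^ m * ‖en‖ := pow_apply_norm V en m
    rw [hen_norm, mul_one] at h2
    calc |((V ^ m) en) k| = ‖((V ^ m) en) k‖ := (Real.norm_eq_abs _).symm
      _ ≤ ‖(V ^ m) en‖ := h1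
      _ ≤ v ^ m := h2
  -- Summability of the operator series
  have hG : Summable (fun m : ℕ => t * (y ^ (2 * m) / ((2 * m).factorial : ℝ))) :=
    heven.mul_left t
  have hgle : ∀ m : ℕ, t ^ (2 * m + 1) / (Nat.factorial (2 * m + 1)) * v ^ m
      ≤ t * (y ^ (2 * m) / ((2 * m).factorial : ℝ)) := by
    intro m
    have hnum : t ^ (2 * m + 1) * v ^ m = t * y ^ (2 * m) := by
      rw [pow_succ]
      rw [← hyj m]; ring
    have hfac : ((2 * m).factorial : ℝ) ≤ ((2 * m + 1).factorial : ℝ) := by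
      exact_mod_cast Nat.factorial_le (Nat.le_succ _)
    have hfp : (0 : ℝ) < ((2 * m).factorial : ℝ) := by
      exact_mod_cast Nat.factorial_pos _
    have hnn : 0 ≤ t * y ^ (2 * m) := mul_nonneg ht (pow_nonneg hy _)
    calc t ^ (2 * m + 1) / (Nat.factorial (2 * m + 1)) * v ^ m
        = t * y ^ (2 * m) / ((2 * m + 1).factorial : ℝ) := by
          rw [div_mul_eq_mul_div, hnum]
      _ ≤ t * y ^ (2 * m) / ((2 * m).factorial : ℝ) :=
          div_le_div_of_nonneg_left hnn hfp hfac |>.trans_eq rfl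
      _ = t * (y ^ (2 * m) / ((2 * m).factorial : ℝ)) := by ring
  have hA : Summable (fun m : ℕ => c m • (V ^ m)) := by
    apply Summable.of_norm
    apply Summable.of_nonneg_of_le (fun m => norm_nonneg _) _ hG
    intro m
    have h2 : ‖V ^ m‖ ≤ v ^ m :=
      ContinuousLinearMap.opNorm_le_bound _ (pow_nonneg hv m) (fun x => pow_apply_norm V x m)
    calc ‖c m • (V ^ m)‖ ≤ ‖c m‖ * ‖V ^ m‖ := ContinuousLinearMap.opNorm_smul_le _ _
      _ ≤ (t ^ (2 * m + 1) / (Nat.factorial (2 * m + 1))) * v ^ m := by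
          apply mul_le_mul _ h2 (norm_nonneg _) _
          · rw [Real.norm_eq_abs, hcm m]
          · positivity
      _ ≤ t * (y ^ (2 * m) / ((2 * m).factorial : ℝ)) := hgle m
  -- swap: entry of tsum = tsum of entries
  set S : ℕ → ℝ := fun m => c m * (((V ^ m) en) k) with hSdef
  have hswap : ((∑' m : ℕ, c m • (V ^ m)) en) k = ∑' m : ℕ, S m := by
    have hφ := ((evalk k).comp (ContinuousLinearMap.apply ℝ E2 en)).map_tsum hA
    simpa [hSdef] using hφ
  rw [hswap]
  -- the dominating sequence
  set B : ℝ := v ^ ρ * t ^ (2 * ρ + 1) / (Nat.factorial (2 * ρ + 1)) with hBdef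
  have hB : 0 ≤ B := by positivity
  set h : ℕ → ℝ := fun m =>
    if m < ρ then 0 else B * (y ^ (2 * (m - ρ)) / ((2 * (m - ρ)).factorial : ℝ))
    with hhdef
  have hh_nonneg : ∀ m, 0 ≤ h m := by
    intro m
    rw [hhdef]
    dsimp only
    split
    · exact le_rfl
    · positivity
  have hS_le : ∀ m, |S m| ≤ h m := by
    intro m
    by_cases hm : m < ρ
    · -- band zero
      have hltz : (K : ℤ) * m < |k - n| := by
        have hm' := (Nat.lt_ceil).mp hm
        have hKpos : (0 : ℝ) < (K : ℝ) := by exact_mod_cast hK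
        rw [lt_div_iff₀ hKpos] at hm'
        have hre : ((K : ℝ) * (m : ℝ)) < |(k : ℝ) - (n : ℝ)| := by nlinarith [hm']
        have habs : ((|k - n| : ℤ) : ℝ) = |(k : ℝ) - (n : ℝ)| := by push_cast; ring_nf
        have : (((K : ℤ) * m : ℤ) : ℝ) < ((|k - n| : ℤ) : ℝ) := by
          rw [habs]; push_cast; exact hre
        exact_mod_cast this
      have h0 : ((V ^ m) en) k = 0 := band_zero K a V hV n m k hltz
      rw [hSdef]
      dsimp only
      rw [h0, mul_zero, abs_zero, hhdef]
      dsimp only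
      rw [if_pos hm]
    · push_neg at hm
      set j : ℕ := m - ρ with hjdef
      have hmj : m = ρ + j := by omega
      have h1 : |S m| ≤ t ^ (2 * m + 1) / (Nat.factorial (2 * m + 1)) * v ^ m := by
        rw [hSdef]
        dsimp only
        rw [abs_mul, hcm m]
        exact mul_le_mul_of_nonneg_left (hentry m) (by positivity)
      have hfacdvd : (Nat.factorial (2 * ρ + 1)) * (Nat.factorial (2 * j))
          ≤ Nat.factorial (2 * m + 1) := by
        have := Nat.factorial_mul_factorial_dvd_factorial_add (2 * ρ + 1) (2 * j)
        have heq : 2 * ρ + 1 + 2 * j = 2 * m + 1 := by omega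
        rw [heq] at this
        exact Nat.le_of_dvd (Nat.factorial_pos _) this
      have hnum : t ^ (2 * m + 1) * v ^ m = (v ^ ρ * t ^ (2 * ρ + 1)) * y ^ (2 * j) := by
        rw [hmj, ← hyj j]
        ring
      have h2 : t ^ (2 * m + 1) / (Nat.factorial (2 * m + 1)) * v ^ m
          ≤ B * (y ^ (2 * j) / ((2 * j).factorial : ℝ)) := by
        have hlhs : t ^ (2 * m + 1) / (Nat.factorial (2 * m + 1)) * v ^ m
            = (v ^ ρ * t ^ (2 * ρ + 1)) * y ^ (2 * j) / (Nat.factorial (2 * m + 1)) := by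
          rw [div_mul_eq_mul_div, hnum]
        have hrhs : B * (y ^ (2 * j) / ((2 * j).factorial : ℝ))
            = (v ^ ρ * t ^ (2 * ρ + 1)) * y ^ (2 * j)
              / ((Nat.factorial (2 * ρ + 1) : ℝ) * (Nat.factorial (2 * j) : ℝ)) := by
          rw [hBdef]; field_simp
        rw [hlhs, hrhs]
        apply div_le_div_of_nonneg_left
        · positivity
        · positivity
        · exact_mod_cast hfacdvd
      rw [hhdef]
      dsimp only
      rw [if_neg (by omega), ← hjdef]
      exact h1.trans h2
  -- summability of h
  have hinj : Function.Injective (fun j : ℕ => ρ + j) := by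
    intro a b hab
    have hab' : ρ + a = ρ + b := hab
    omega
  have hcomp : (h ∘ fun j : ℕ => ρ + j)
      = fun j : ℕ => B * (y ^ (2 * j) / ((2 * j).factorial : ℝ)) := by
    funext j
    have hj : ρ + j - ρ = j := by omega
    simp only [Function.comp_apply, hhdef]
    rw [if_neg (by omega), hj]
  have hzero : ∀ x ∉ Set.range (fun j : ℕ => ρ + j), h x = 0 := by
    intro x hx
    have hxρ : x < ρ := by
      by_contra hc
      exact hx ⟨x - ρ, show ρ + (x - ρ) = x by omega⟩
    rw [hhdef]; dsimp only; rw [if_pos hxρ]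
  have hhsum : Summable h := by
    rw [← Function.Injective.summable_iff hinj hzero, hcomp]
    exact heven.mul_left B
  have hSsum : Summable (fun m => |S m|) :=
    Summable.of_nonneg_of_le (fun m => abs_nonneg _) hS_le hhsum
  -- tsum h value
  have htsumh : ∑' m, h m = B * ∑' j : ℕ, y ^ (2 * j) / ((2 * j).factorial : ℝ) := by
    have hsupp' : Function.support h ⊆ Set.range (fun j : ℕ => ρ + j) := by
      intro x hx
      by_contra hc
      apply hx
      exact hzero x hc
    rw [← Function.Injective.tsum_eq hinj hsupp']
    calc ∑' (c : ℕ), h (ρ + c)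
        = ∑' (c : ℕ), B * (y ^ (2 * c) / ((2 * c).factorial : ℝ)) :=
          tsum_congr (fun c => congrFun hcomp c)
      _ = B * ∑' j : ℕ, y ^ (2 * j) / ((2 * j).factorial : ℝ) := tsum_mul_left
  -- even sum ≤ exp
  have hexp : ∑' j : ℕ, y ^ (2 * j) / ((2 * j).factorial : ℝ) ≤ Real.exp y := by
    have hexpeq : Real.exp y = ∑' i : ℕ, y ^ i / (i.factorial : ℝ) := by
      rw [Real.exp_eq_exp_ℝ, NormedSpace.exp_eq_tsum_div]
    rw [hexpeq]
    exact Summable.tsum_le_tsum_of_inj (fun j : ℕ => 2 * j) h2inj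
      (fun c _ => by positivity) (fun i => le_refl _) heven hbase
  -- put together
  calc |∑' m, S m| ≤ ∑' m, |S m| := by
        have := norm_tsum_le_tsum_norm (f := S) (by simpa [Real.norm_eq_abs] using hSsum)
        simpa [Real.norm_eq_abs] using this
    _ ≤ ∑' m, h m := Summable.tsum_le_tsum hS_le hSsum hhsum
    _ = B * ∑' j : ℕ, y ^ (2 * j) / ((2 * j).factorial : ℝ) := htsumh
    _ ≤ B * Real.exp y := mul_le_mul_of_nonneg_left hexp hB
    _ = ‖V‖ ^ ρ * t ^ (2 * ρ + 1) / (Nat.factorial (2 * ρ + 1)) * Real.exp (Real.sqrt ‖V‖ * t) :=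
        by rw [hBdef, hvdef, hydef]
end
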